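/- arXiv:1910.13516 — 2 statements merged into one kernel-verified Lean document; each statement's English description precedes it below -/
import Mathlib

section
/- Let F : ℝ^d → ℝ be differentiable with L-Lipschitz continuous gradient (L ≥ 0), let ν > 0, let x ∈ ℝ^d, and let H be a d×d real matrix with operator norm ‖H‖. Then (H ∇^FD F(x))ᵀ (H ∇F(x)) ≥ ‖H ∇F(x)‖² − ‖H ∇F(x)‖ · ‖H‖ · (Lν√d)/2. -/
open MeasureTheory
open scoped RealInnerProductSpace

noncomputable def fdGrad {d : ℕ} (ν : ℝ) (g : EuclideanSpace ℝ (Fin d) → ℝ)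
    (x : EuclideanSpace ℝ (Fin d)) : EuclideanSpace ℝ (Fin d) :=
  (WithLp.equiv 2 (Fin d → ℝ)).symm
    fun j => (g (x + ν • EuclideanSpace.single j (1:ℝ)) - g x) / ν


noncomputable def mApp {d : ℕ} (H : Matrix (Fin d) (Fin d) ℝ) :
    EuclideanSpace ℝ (Fin d) →L[ℝ] EuclideanSpace ℝ (Fin d) :=
  Matrix.toEuclideanCLM (𝕜 := ℝ) H

/- The descent lemma `|F (x + v) - F x - ⟪∇F x, v⟫| ≤ L‖v‖²/2` puts each forward difference
quotient within `Lν/2` of the corresponding partial derivative, so `‖∇^FD F x - ∇F x‖ ≤ √d Lν/2`.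
With `u = H ∇^FD F x` and `w = H ∇F x`, write `⟪u, w⟫ = ‖w‖² + ⟪u - w, w⟫` and bound the last term
by Cauchy–Schwarz and `‖u - w‖ ≤ ‖H‖ ‖∇^FD F x - ∇F x‖`. -/

section Descent

variable {E : Type*} [NormedAddCommGroup E] [InnerProductSpace ℝ E] [CompleteSpace E]
  {F : E → ℝ} {L : ℝ}

theorem DifferentiableAt.hasDerivAt_comp_add_smul {x v : E} {t : ℝ}
    (hF : DifferentiableAt ℝ F (x + t • v)) :
    HasDerivAt (fun t : ℝ => F (x + t • v)) ⟪gradient F (x + t • v), v⟫ t := by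
  have hline : HasDerivAt (fun t : ℝ => x + t • v) v t := by
    simpa using ((hasDerivAt_id t).smul_const v).const_add x
  simpa [Function.comp_def] using
    hF.hasGradientAt.hasFDerivAt.comp_hasDerivAt t hline

theorem abs_sub_sub_inner_gradient_le (hF : Differentiable ℝ F)
    (hLip : ∀ x y, ‖gradient F x - gradient F y‖ ≤ L * ‖x - y‖) (x v : E) :
    |F (x + v) - F x - ⟪gradient F x, v⟫| ≤ L / 2 * ‖v‖ ^ 2 := by
  -- `φ` has `|φ'(t)| ≤ L‖v‖²t` on `[0, 1]`, so it stays below the parabola `L‖v‖²t²/2`.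
  set φ : ℝ → ℝ := fun t => F (x + t • v) - F x - t * ⟪gradient F x, v⟫
  have hφ : ∀ t, HasDerivAt φ (⟪gradient F (x + t • v), v⟫ - ⟪gradient F x, v⟫) t := fun t => by
    have := ((hF (x + t • v)).hasDerivAt_comp_add_smul.sub_const (F x)).sub
      ((hasDerivAt_id t).mul_const ⟪gradient F x, v⟫)
    rwa [one_mul] at this
  have hB : ∀ t, HasDerivAt (fun t => L / 2 * ‖v‖ ^ 2 * t ^ 2) (L * ‖v‖ ^ 2 * t) t := fun t => by
    refine ((hasDerivAt_pow 2 t).const_mul (L / 2 * ‖v‖ ^ 2)).congr_deriv ?_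
    norm_num
    ring
  have hbound : ∀ t ∈ Set.Ico (0 : ℝ) 1,
      ‖⟪gradient F (x + t • v), v⟫ - ⟪gradient F x, v⟫‖ ≤ L * ‖v‖ ^ 2 * t := by
    rintro t ⟨ht, -⟩
    calc ‖⟪gradient F (x + t • v), v⟫ - ⟪gradient F x, v⟫‖
        = ‖⟪gradient F (x + t • v) - gradient F x, v⟫‖ := by rw [inner_sub_left]
      _ ≤ ‖gradient F (x + t • v) - gradient F x‖ * ‖v‖ := norm_inner_le_norm _ _
      _ ≤ L * ‖x + t • v - x‖ * ‖v‖ := by gcongr; exact hLip _ _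
      _ = L * ‖v‖ ^ 2 * t := by
        rw [add_sub_cancel_left, norm_smul, Real.norm_of_nonneg ht]; ring
  have := image_norm_le_of_norm_deriv_right_le_deriv_boundary
    (fun t _ => (hφ t).continuousAt.continuousWithinAt) (fun t _ => (hφ t).hasDerivWithinAt)
    (by simp [φ]) hB hbound (Set.right_mem_Icc.2 zero_le_one)
  simpa [φ] using this

theorem abs_slope_sub_inner_gradient_le {ν : ℝ} (hF : Differentiable ℝ F)
    (hLip : ∀ x y, ‖gradient F x - gradient F y‖ ≤ L * ‖x - y‖) (hν : 0 < ν) (x : E) {e : E}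
    (he : ‖e‖ = 1) :
    |(F (x + ν • e) - F x) / ν - ⟪gradient F x, e⟫| ≤ L * ν / 2 := by
  have h := abs_sub_sub_inner_gradient_le hF hLip x (ν • e)
  rw [norm_smul, he, Real.norm_of_nonneg hν.le, inner_smul_right] at h
  have hslope : (F (x + ν • e) - F x) / ν - ⟪gradient F x, e⟫
      = (F (x + ν • e) - F x - ν * ⟪gradient F x, e⟫) / ν := by
    field_simp
  rw [hslope, abs_div, abs_of_pos hν, div_le_iff₀ hν]
  linarith

end Descent

theorem EuclideanSpace.norm_le_sqrt_card_mul {ι : Type*} [Fintype ι] (v : EuclideanSpace ℝ ι)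
    {C : ℝ} (h : ∀ i, |v i| ≤ C) : ‖v‖ ≤ √(Fintype.card ι) * C := by
  rcases isEmpty_or_nonempty ι with hι | ⟨⟨i⟩⟩
  · simp [Subsingleton.elim v 0]
  have hC : 0 ≤ C := (abs_nonneg _).trans (h i)
  calc ‖v‖ = √(∑ i, v i ^ 2) := by simp [EuclideanSpace.norm_eq]
    _ ≤ √(∑ _i : ι, C ^ 2) := Real.sqrt_le_sqrt <| Finset.sum_le_sum fun i _ =>
        sq_le_sq' (abs_le.1 (h i)).1 (abs_le.1 (h i)).2
    _ = √(Fintype.card ι) * C := by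
        rw [Finset.sum_const, Finset.card_univ, nsmul_eq_mul, Real.sqrt_mul (Nat.cast_nonneg _),
          Real.sqrt_sq hC]

theorem fdGrad_sub_gradient_apply {d : ℕ} (ν : ℝ) (g : EuclideanSpace ℝ (Fin d) → ℝ)
    (x : EuclideanSpace ℝ (Fin d)) (j : Fin d) :
    (fdGrad ν g x - gradient g x) j
      = (g (x + ν • EuclideanSpace.single j 1) - g x) / ν
        - ⟪gradient g x, EuclideanSpace.single j 1⟫ := by
  rw [EuclideanSpace.inner_single_right]
  simp [fdGrad]

theorem norm_fdGrad_sub_gradient_le {d : ℕ} {L ν : ℝ} {F : EuclideanSpace ℝ (Fin d) → ℝ}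
    (hF : Differentiable ℝ F) (hLip : ∀ x y, ‖gradient F x - gradient F y‖ ≤ L * ‖x - y‖)
    (hν : 0 < ν) (x : EuclideanSpace ℝ (Fin d)) :
    ‖fdGrad ν F x - gradient F x‖ ≤ √d * (L * ν / 2) := by
  have h := EuclideanSpace.norm_le_sqrt_card_mul (fdGrad ν F x - gradient F x) fun j => by
    rw [fdGrad_sub_gradient_apply]
    exact abs_slope_sub_inner_gradient_le hF hLip hν x (by simp)
  rwa [Fintype.card_fin] at h

theorem sq_norm_sub_mul_norm_sub_le_real_inner {E : Type*} [NormedAddCommGroup E]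
    [InnerProductSpace ℝ E] (u w : E) : ‖w‖ ^ 2 - ‖w‖ * ‖u - w‖ ≤ ⟪u, w⟫ := by
  have h : ⟪u, w⟫ = ‖w‖ ^ 2 + ⟪u - w, w⟫ := by
    rw [inner_sub_left, real_inner_self_eq_norm_sq]; ring
  rw [h, mul_comm]
  linarith [neg_abs_le ⟪u - w, w⟫, abs_real_inner_le_norm (u - w) w]

theorem stmt6_general {d : ℕ} (L ν : ℝ) (hν : 0 < ν)
    (F : EuclideanSpace ℝ (Fin d) → ℝ) (hF : Differentiable ℝ F)
    (hLip : ∀ x y, ‖gradient F x - gradient F y‖ ≤ L * ‖x - y‖)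
    (x : EuclideanSpace ℝ (Fin d)) (H : Matrix (Fin d) (Fin d) ℝ) :
    ⟪mApp H (fdGrad ν F x), mApp H (gradient F x)⟫
      ≥ ‖mApp H (gradient F x)‖ ^ 2
        - ‖mApp H (gradient F x)‖ * ‖mApp H‖ * (L * ν * Real.sqrt d) / 2 := by
  set A := mApp H
  have hA : ‖A (fdGrad ν F x) - A (gradient F x)‖ ≤ ‖A‖ * (√d * (L * ν / 2)) := by
    rw [← map_sub]
    exact A.le_of_opNorm_le_of_le le_rfl (norm_fdGrad_sub_gradient_le hF hLip hν x)
  calc ‖A (gradient F x)‖ ^ 2 - ‖A (gradient F x)‖ * ‖A‖ * (L * ν * √d) / 2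
      = ‖A (gradient F x)‖ ^ 2 - ‖A (gradient F x)‖ * (‖A‖ * (√d * (L * ν / 2))) := by ring
    _ ≤ ‖A (gradient F x)‖ ^ 2 - ‖A (gradient F x)‖ * ‖A (fdGrad ν F x) - A (gradient F x)‖ := by
        gcongr
    _ ≤ ⟪A (fdGrad ν F x), A (gradient F x)⟫ := sq_norm_sub_mul_norm_sub_le_real_inner _ _

theorem stmt6 {d : ℕ} (L ν : ℝ) (hL : 0 ≤ L) (hν : 0 < ν)
    (F : EuclideanSpace ℝ (Fin d) → ℝ) (hF : Differentiable ℝ F)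
    (hLip : ∀ x y, ‖gradient F x - gradient F y‖ ≤ L * ‖x - y‖)
    (x : EuclideanSpace ℝ (Fin d)) (H : Matrix (Fin d) (Fin d) ℝ) :
    ⟪mApp H (fdGrad ν F x), mApp H (gradient F x)⟫
      ≥ ‖mApp H (gradient F x)‖ ^ 2
        - ‖mApp H (gradient F x)‖ * ‖mApp H‖ * (L * ν * Real.sqrt d) / 2 :=
  stmt6_general L ν hν F hF hLip x H
end

section
/- Let f : ℝ^d → ℝ be differentiable with L-Lipschitz continuous gradient (L > 0), let f̂ : ℝ^d → ℝ satisfy |f̂(y) − f(y)| ≤ ε_m for all y (ε_m > 0), and let x ∈ ℝ^d. With the choice ν* = 2·√(ε_m/L) of the finite-difference parameter, the forward finite-difference gradient estimate computed from the noisy function values satisfies ‖∇^FD_{ν*} f̂(x) − ∇f(x)‖ ≤ 2·√(L·ε_m)·√d. -/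
open MeasureTheory
open scoped RealInnerProductSpace

/-!
Along a coordinate direction, the forward difference quotient of `f̂` differs from that of `f`
by at most `2 εₘ / ν` (noise), and the one of `f` differs from the partial derivative by at most
`L ν / 2` (the quadratic upper bound for functions with `L`-Lipschitz gradient). The choice
`ν = 2 √(εₘ / L)` makes both terms equal to `√(L εₘ)`, and `d` coordinates each off by at most
`2 √(L εₘ)` give a Euclidean error of at most `2 √(L εₘ) √d`.
-/

theorem norm_image_sub_sub_fderiv_le_of_lipschitz {E F : Type*} [NormedAddCommGroup E]
    [NormedSpace ℝ E] [NormedAddCommGroup F] [NormedSpace ℝ F] {f : E → F} {L : ℝ}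
    (hf : Differentiable ℝ f) (hLip : ∀ x y, ‖fderiv ℝ f x - fderiv ℝ f y‖ ≤ L * ‖x - y‖)
    (x v : E) : ‖f (x + v) - f x - fderiv ℝ f x v‖ ≤ L / 2 * ‖v‖ ^ 2 := by
  let g : ℝ → F := fun t => f (x + t • v) - f x - t • fderiv ℝ f x v
  have hg : ∀ t, HasDerivAt g (fderiv ℝ f (x + t • v) v - fderiv ℝ f x v) t := fun t => by
    have hline : HasDerivAt (fun t : ℝ => x + t • v) v t := by
      simpa using ((hasDerivAt_id t).smul_const v).const_add x
    exact (((hf _).hasFDerivAt.comp_hasDerivAt t hline).sub_const (f x)).sub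
      (by simpa using (hasDerivAt_id t).smul_const (fderiv ℝ f x v))
  have hB : ∀ t, HasDerivAt (fun s : ℝ => L / 2 * ‖v‖ ^ 2 * s ^ 2) (L * ‖v‖ ^ 2 * t) t :=
    fun t => ((hasDerivAt_pow 2 t).const_mul _).congr_deriv (by push_cast; ring)
  have hbound : ∀ t ∈ Set.Ico (0 : ℝ) 1,
      ‖fderiv ℝ f (x + t • v) v - fderiv ℝ f x v‖ ≤ L * ‖v‖ ^ 2 * t := fun t ht =>
    calc ‖fderiv ℝ f (x + t • v) v - fderiv ℝ f x v‖
        ≤ ‖fderiv ℝ f (x + t • v) - fderiv ℝ f x‖ * ‖v‖ := by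
          rw [← sub_apply]; exact ContinuousLinearMap.le_opNorm _ _
      _ ≤ L * ‖x + t • v - x‖ * ‖v‖ := by gcongr; exact hLip _ _
      _ = L * ‖v‖ ^ 2 * t := by
          rw [add_sub_cancel_left, norm_smul, Real.norm_of_nonneg ht.1]; ring
  have hg_one := image_norm_le_of_norm_deriv_right_le_deriv_boundary
    (fun t _ => (hg t).continuousAt.continuousWithinAt) (fun t _ => (hg t).hasDerivWithinAt)
    (by simp [g]) hB hbound (Set.right_mem_Icc.2 zero_le_one)
  simpa [g] using hg_one

theorem norm_gradient_sub_gradient {F : Type*} [NormedAddCommGroup F] [InnerProductSpace ℝ F]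
    [CompleteSpace F] (f : F → ℝ) (x y : F) :
    ‖gradient f x - gradient f y‖ = ‖fderiv ℝ f x - fderiv ℝ f y‖ := by
  rw [← toDual_gradient, ← toDual_gradient, ← map_sub, LinearIsometryEquiv.norm_map]

theorem EuclideanSpace.norm_le_mul_sqrt_card {ι : Type*} [Fintype ι] {v : EuclideanSpace ℝ ι}
    {c : ℝ} (h : ∀ i, |v i| ≤ c) : ‖v‖ ≤ c * √(Fintype.card ι) := by
  rcases isEmpty_or_nonempty ι with hι | ⟨⟨i⟩⟩
  · simp [Subsingleton.elim v 0]
  have hc : 0 ≤ c := (abs_nonneg _).trans (h i)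
  rw [EuclideanSpace.norm_eq, mul_comm, ← Real.sqrt_sq hc, ← Real.sqrt_mul (Nat.cast_nonneg _)]
  gcongr
  calc ∑ j, ‖v j‖ ^ 2 ≤ ∑ _j : ι, c ^ 2 := by
        gcongr with j; rw [Real.norm_eq_abs]; exact h j
    _ = _ := by simp

theorem gradient_apply_eq_fderiv_single {ι : Type*} [Fintype ι] [DecidableEq ι]
    (f : EuclideanSpace ℝ ι → ℝ) (x : EuclideanSpace ℝ ι) (j : ι) :
    gradient f x j = fderiv ℝ f x (EuclideanSpace.single j 1) := by
  rw [← toDual_gradient, InnerProductSpace.toDual_apply_apply, EuclideanSpace.inner_single_right]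
  simp

theorem fdGrad_apply {d : ℕ} (ν : ℝ) (g : EuclideanSpace ℝ (Fin d) → ℝ)
    (x : EuclideanSpace ℝ (Fin d)) (j : Fin d) :
    fdGrad ν g x j = (g (x + ν • EuclideanSpace.single j 1) - g x) / ν := rfl

theorem abs_forwardDiff_sub_fderiv_le {E : Type*} [NormedAddCommGroup E] [NormedSpace ℝ E]
    {f fh : E → ℝ} {L ε ν : ℝ} (hf : Differentiable ℝ f)
    (hLip : ∀ x y, ‖fderiv ℝ f x - fderiv ℝ f y‖ ≤ L * ‖x - y‖)
    (hnoise : ∀ y, |fh y - f y| ≤ ε) (hν : 0 < ν) (x e : E) :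
    |(fh (x + ν • e) - fh x) / ν - fderiv ℝ f x e| ≤ 2 * ε / ν + L / 2 * ν * ‖e‖ ^ 2 := by
  have htaylor := norm_image_sub_sub_fderiv_le_of_lipschitz hf hLip x (ν • e)
  rw [Real.norm_eq_abs, map_smul, smul_eq_mul, norm_smul, Real.norm_of_nonneg hν.le] at htaylor
  have hsplit : (fh (x + ν • e) - fh x) / ν - fderiv ℝ f x e
      = ((fh (x + ν • e) - f (x + ν • e)) - (fh x - f x)
          + (f (x + ν • e) - f x - ν * fderiv ℝ f x e)) / ν := by
    field_simp; ring
  calc |(fh (x + ν • e) - fh x) / ν - fderiv ℝ f x e|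
      ≤ (|fh (x + ν • e) - f (x + ν • e)| + |fh x - f x|
          + |f (x + ν • e) - f x - ν * fderiv ℝ f x e|) / ν := by
        rw [hsplit, abs_div, abs_of_pos hν]
        gcongr
        exact (abs_add_le _ _).trans (by gcongr; exact abs_sub _ _)
    _ ≤ (ε + ε + L / 2 * (ν * ‖e‖) ^ 2) / ν := by gcongr <;> apply hnoise
    _ = 2 * ε / ν + L / 2 * ν * ‖e‖ ^ 2 := by field_simp; ring

theorem stmt16 {d : ℕ} (L εm : ℝ) (hL : 0 < L) (hε : 0 < εm)
    (f : EuclideanSpace ℝ (Fin d) → ℝ) (hf : Differentiable ℝ f)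
    (hLip : ∀ x y, ‖gradient f x - gradient f y‖ ≤ L * ‖x - y‖)
    (fh : EuclideanSpace ℝ (Fin d) → ℝ) (hnoise : ∀ y, |fh y - f y| ≤ εm)
    (x : EuclideanSpace ℝ (Fin d)) :
    ‖fdGrad (2 * Real.sqrt (εm / L)) fh x - gradient f x‖
      ≤ 2 * Real.sqrt (L * εm) * Real.sqrt d := by
  set s := √(εm / L)
  have hs : 0 < s := by positivity
  have hLip' (x y) : ‖fderiv ℝ f x - fderiv ℝ f y‖ ≤ L * ‖x - y‖ :=
    norm_gradient_sub_gradient f x y ▸ hLip x y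
  have hεm : εm = L * s ^ 2 := by
    rw [Real.sq_sqrt (by positivity)]; field_simp
  have hbalance : 2 * εm / (2 * s) + L / 2 * (2 * s) = 2 * √(L * εm) := by
    have hroot : √(L * εm) = L * s := by
      rw [hεm, show L * (L * s ^ 2) = (L * s) ^ 2 by ring, Real.sqrt_sq (by positivity)]
    rw [hroot, hεm]; field_simp; ring
  refine (EuclideanSpace.norm_le_mul_sqrt_card (c := 2 * √(L * εm)) fun j => ?_).trans_eq (by simp)
  rw [PiLp.sub_apply, fdGrad_apply, gradient_apply_eq_fderiv_single, ← hbalance]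
  simpa using
    abs_forwardDiff_sub_fderiv_le hf hLip' hnoise (by positivity) x (EuclideanSpace.single j 1)
end
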